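/- The function Ψ tends to +∞ as ρ → +∞; that is, for every K > 0 there exists R > 0 such that Ψ(ρ) > K for all ρ > R. -/

import Mathlib

/-- The relative pressure potential `G(ρ) = ρ ∫_{ρ̄}^{ρ} s⁻²(p(s) - p̄) ds`
    with `p(s) = a s^γ`. -/
noncomputable def Gfun (a γ ρb ρ : ℝ) : ℝ :=
  ρ * ∫ s in ρb..ρ, (a * s ^ γ - a * ρb ^ γ) / s ^ 2

/-- Kanel''s function `Ψ(ρ) = ∫_{ρ̄}^{ρ} √(G(s)) / s^{3/2} ds`. -/
noncomputable def PsiFun (a γ ρb ρ : ℝ) : ℝ :=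
  ∫ s in ρb..ρ, Real.sqrt (Gfun a γ ρb s) / s ^ ((3 : ℝ) / 2)

/-! For `s ≥ r > ρ̄` the integrand of `G` is nonnegative, so `G(s) ≥ c s` with
`c = ∫_{ρ̄}^{r} s⁻² (p(s) - p̄) ds > 0`. The integrand of `Ψ` is therefore at least `√c / s`
beyond `r`, and it is nonnegative before `r`, whence `Ψ(ρ) ≥ √c log (ρ / r) → ∞`. -/

open MeasureTheory intervalIntegral Set Filter

lemma intervalIntegrable_of_continuousOn_Ioi {f : ℝ → ℝ} {c x y : ℝ}
    (hf : ContinuousOn f (Ioi c)) (hx : c < x) (hy : c < y) :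
    IntervalIntegrable f volume x y :=
  (hf.mono (ordConnected_Ioi.uIcc_subset hx hy)).intervalIntegrable

lemma continuousOn_integral_of_continuousOn_Ioi {f : ℝ → ℝ} {c a : ℝ}
    (hf : ContinuousOn f (Ioi c)) (ha : c < a) :
    ContinuousOn (fun x => ∫ t in a..x, f t) (Ioi c) := fun x hx =>
  (integral_hasDerivAt_right (intervalIntegrable_of_continuousOn_Ioi hf ha hx)
    (hf.stronglyMeasurableAtFilter isOpen_Ioi x hx)
    (hf.continuousAt (isOpen_Ioi.mem_nhds hx))).continuousAt.continuousWithinAt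

noncomputable def pressureIntegrand (a γ ρb t : ℝ) : ℝ :=
  (a * t ^ γ - a * ρb ^ γ) / t ^ 2

lemma Gfun_eq (a γ ρb ρ : ℝ) :
    Gfun a γ ρb ρ = ρ * ∫ t in ρb..ρ, pressureIntegrand a γ ρb t := rfl

lemma continuousOn_pressureIntegrand (a γ ρb : ℝ) :
    ContinuousOn (pressureIntegrand a γ ρb) (Ioi 0) := fun t (ht : 0 < t) =>
  ((((Real.continuousAt_rpow_const t γ (Or.inl ht.ne')).const_mul a).sub
    continuousAt_const).div (continuous_pow 2).continuousAt (by positivity)).continuousWithinAt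

lemma pressureIntegrand_nonneg {a γ ρb t : ℝ} (ha : 0 ≤ a) (hγ : 0 ≤ γ) (hρb : 0 ≤ ρb)
    (ht : ρb ≤ t) : 0 ≤ pressureIntegrand a γ ρb t :=
  div_nonneg (sub_nonneg.2 (by gcongr)) (sq_nonneg t)

lemma pressureIntegrand_pos {a γ ρb t : ℝ} (ha : 0 < a) (hγ : 0 < γ) (hρb : 0 ≤ ρb)
    (ht : ρb < t) : 0 < pressureIntegrand a γ ρb t :=
  div_pos (sub_pos.2 (by gcongr)) (pow_pos (hρb.trans_lt ht) 2)

lemma continuousOn_sqrt_Gfun_div (a γ : ℝ) {ρb : ℝ} (hρb : 0 < ρb) :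
    ContinuousOn (fun s => √(Gfun a γ ρb s) / s ^ ((3 : ℝ) / 2)) (Ioi 0) :=
  have hG : ContinuousOn (Gfun a γ ρb) (Ioi 0) := continuousOn_id.mul
    (continuousOn_integral_of_continuousOn_Ioi (continuousOn_pressureIntegrand a γ ρb) hρb)
  hG.sqrt.div
    (fun s (hs : 0 < s) => (Real.continuousAt_rpow_const s _ (Or.inl hs.ne')).continuousWithinAt)
    fun s (hs : 0 < s) => by positivity

lemma integral_pressureIntegrand_mul_le_Gfun {a γ ρb r s : ℝ} (ha : 0 ≤ a) (hγ : 0 ≤ γ)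
    (hρb : 0 < ρb) (hr : ρb ≤ r) (hrs : r ≤ s) :
    (∫ t in ρb..r, pressureIntegrand a γ ρb t) * s ≤ Gfun a γ ρb s := by
  have hmono :
      ∫ t in ρb..r, pressureIntegrand a γ ρb t ≤ ∫ t in ρb..s, pressureIntegrand a γ ρb t :=
    integral_mono_interval le_rfl hr hrs
      ((ae_restrict_mem measurableSet_Ioc).mono fun t ht =>
        pressureIntegrand_nonneg ha hγ hρb.le ht.1.le)
      (intervalIntegrable_of_continuousOn_Ioi (continuousOn_pressureIntegrand a γ ρb) hρb
        (hρb.trans_le (hr.trans hrs)))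
  rw [Gfun_eq, mul_comm s]
  exact mul_le_mul_of_nonneg_right hmono (by linarith)

lemma sqrt_mul_log_le_PsiFun {a γ ρb r ρ : ℝ} (ha : 0 ≤ a) (hγ : 0 ≤ γ) (hρb : 0 < ρb)
    (hr : ρb ≤ r) (hrρ : r ≤ ρ) :
    √(∫ t in ρb..r, pressureIntegrand a γ ρb t) * Real.log (ρ / r) ≤ PsiFun a γ ρb ρ := by
  set c := ∫ t in ρb..r, pressureIntegrand a γ ρb t
  set ψ := fun s => √(Gfun a γ ρb s) / s ^ ((3 : ℝ) / 2)
  have hr0 : 0 < r := hρb.trans_le hr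
  have hρ0 : 0 < ρ := hr0.trans_le hrρ
  have hψ_int : ∀ x y, 0 < x → 0 < y → IntervalIntegrable ψ volume x y := fun _ _ =>
    intervalIntegrable_of_continuousOn_Ioi (continuousOn_sqrt_Gfun_div a γ hρb)
  have hψ_nonneg : 0 ≤ ∫ s in ρb..r, ψ s :=
    integral_nonneg hr fun s hs => by have := hρb.trans_le hs.1; positivity
  have hψ_ge : ∀ s ∈ Icc r ρ, √c * (1 / s) ≤ ψ s := by
    rintro s ⟨hrs, -⟩
    have hs : 0 < s := hr0.trans_le hrs
    have hs32 : s ^ ((3 : ℝ) / 2) = s * √s := by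
      rw [show (3 : ℝ) / 2 = 1 + 1 / 2 by norm_num, Real.rpow_add hs, Real.rpow_one,
        Real.sqrt_eq_rpow]
    calc √c * (1 / s) = √(c * s) / s ^ ((3 : ℝ) / 2) := by
          rw [hs32, Real.sqrt_mul' _ hs.le]; field_simp
      _ ≤ √(Gfun a γ ρb s) / s ^ ((3 : ℝ) / 2) := by
          gcongr
          exact integral_pressureIntegrand_mul_le_Gfun ha hγ hρb hr hrs
  have hlog : ∫ s in r..ρ, √c * (1 / s) = √c * Real.log (ρ / r) := by
    rw [intervalIntegral.integral_const_mul, integral_one_div_of_pos hr0 hρ0]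
  have h_inv_int : IntervalIntegrable (fun s => √c * (1 / s)) volume r ρ :=
    intervalIntegrable_of_continuousOn_Ioi
      (continuousOn_const.mul (continuousOn_const.div continuousOn_id fun s hs => ne_of_gt hs))
      hr0 hρ0
  calc √c * Real.log (ρ / r) ≤ ∫ s in r..ρ, ψ s := by
        rw [← hlog]
        exact integral_mono_on hrρ h_inv_int (hψ_int r ρ hr0 hρ0) hψ_ge
    _ ≤ (∫ s in ρb..r, ψ s) + ∫ s in r..ρ, ψ s := le_add_of_nonneg_left hψ_nonneg
    _ = PsiFun a γ ρb ρ :=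
        integral_add_adjacent_intervals (hψ_int ρb r hρb hr0) (hψ_int r ρ hr0 hρ0)

lemma tendsto_PsiFun_atTop {a γ ρb : ℝ} (ha : 0 < a) (hγ : 0 < γ) (hρb : 0 < ρb) :
    Tendsto (PsiFun a γ ρb) atTop atTop := by
  have h2ρb : 0 < 2 * ρb := by linarith
  have hc : 0 < ∫ t in ρb..2 * ρb, pressureIntegrand a γ ρb t :=
    intervalIntegral_pos_of_pos_on
      (intervalIntegrable_of_continuousOn_Ioi (continuousOn_pressureIntegrand a γ ρb) hρb h2ρb)
      (fun t ht => pressureIntegrand_pos ha hγ hρb.le ht.1) (by linarith)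
  refine tendsto_atTop_mono' _ ?_
    ((Real.tendsto_log_atTop.comp (tendsto_id.atTop_div_const h2ρb)).const_mul_atTop
      (Real.sqrt_pos.2 hc))
  filter_upwards [eventually_ge_atTop (2 * ρb)] with ρ hρ
  exact sqrt_mul_log_le_PsiFun ha.le hγ.le hρb (by linarith) hρ

theorem PsiFun_tendsto_atTop (a γ ρb : ℝ) (ha : 0 < a) (hγ : 1 ≤ γ) (hρb : 0 < ρb) :
    ∀ K : ℝ, 0 < K → ∃ R : ℝ, 0 < R ∧ ∀ ρ : ℝ, R < ρ → K < PsiFun a γ ρb ρ := by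
  intro K _
  obtain ⟨R, hR⟩ := eventually_atTop.1
    ((tendsto_PsiFun_atTop ha (zero_lt_one.trans_le hγ) hρb).eventually_gt_atTop K)
  exact ⟨max R 1, by positivity, fun ρ hρ => hR ρ (max_lt_iff.1 hρ).1.le⟩
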